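/- With h(a) as above (the expected terminal payoff of the put-call portfolio when the appreciation rate is a), h(r) = e^{rT}·X₀, where X₀ = μ_p·p_BS(S₀,K_p,r,T,σ) + μ_c·c_BS(S₀,K_c,r,T,σ) is the initial Black-Scholes cost of the portfolio. Hence for the proportion μ_c/μ_p = (1 − Φ(d_p))/Φ(d_c), the average gain E X_T − e^{rT}X₀ is strictly positive whenever a ≠ r and zero when a = r. -/

import Mathlib

/-!
Write `X = S₀ exp (rT - σ²T/2 + σ√T Z)`; then `h a` is the expected put-call payoff when the
spot is scaled to `m S₀`, `m = e^{(a-r)T}`. Exponential tilting, `e^{cz} φ(z) = e^{c²/2} φ(z - c)`,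
turns the truncated moments `E[X; X > K]` into values of `Φ`; this gives the Black-Scholes
formulas and hence `h r = e^{rT} X₀`.

For `a ≠ r`, the hinge `x ↦ (x - K)⁺` lies above its tangent at `X`, strictly on the event that
`X` and `m X` fall on opposite sides of `K`, which has positive probability. Taking
expectations, `h a - h r` strictly exceeds `(m - 1) S₀ e^{rT} (μc Φ(d_c) - μp (1 - Φ(d_p)))`,
and the chosen proportion `μc / μp` makes this tangent term vanish.
-/

open MeasureTheory ProbabilityTheory Real Set

/-- Standard normal CDF. -/
noncomputable def Phi (x : ℝ) : ℝ :=
  ∫ y in Set.Iic x, (Real.sqrt (2 * Real.pi))⁻¹ * Real.exp (-(y ^ 2) / 2)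

/-- Standard normal density. -/
noncomputable def phi (y : ℝ) : ℝ := (Real.sqrt (2 * Real.pi))⁻¹ * Real.exp (-(y ^ 2) / 2)

/-- Black-Scholes d value. -/
noncomputable def dBS (S₀ K r T σ : ℝ) : ℝ :=
  (Real.log (S₀ / K) + T * (r + σ ^ 2 / 2)) / (σ * Real.sqrt T)

/-- Black-Scholes call price (closed form). -/
noncomputable def callBS (S₀ K r T σ : ℝ) : ℝ :=
  S₀ * Phi (dBS S₀ K r T σ) - K * Real.exp (-(r * T)) * Phi (dBS S₀ K r T σ - σ * Real.sqrt T)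

/-- Black-Scholes put price (via put-call parity). -/
noncomputable def putBS (S₀ K r T σ : ℝ) : ℝ :=
  callBS S₀ K r T σ - S₀ + K * Real.exp (-(r * T))

lemma phi_eq_gaussianPDFReal : phi = gaussianPDFReal 0 1 := by
  ext x
  simp [phi, gaussianPDFReal]

lemma phi_pos (x : ℝ) : 0 < phi x := by
  rw [phi_eq_gaussianPDFReal]; exact gaussianPDFReal_pos 0 1 x one_ne_zero

lemma integrable_phi : Integrable phi := by
  rw [phi_eq_gaussianPDFReal]; exact integrable_gaussianPDFReal 0 1

lemma phi_neg (x : ℝ) : phi (-x) = phi x := by simp [phi]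

lemma Phi_pos (x : ℝ) : 0 < Phi x := by
  change 0 < ∫ y in Iic x, phi y
  rw [setIntegral_pos_iff_support_of_nonneg_ae (ae_of_all _ fun y => (phi_pos y).le)
    integrable_phi.integrableOn, Function.support_eq_univ fun y => (phi_pos y).ne', univ_inter,
    Real.volume_Iic]
  exact ENNReal.zero_lt_top

lemma setIntegral_Ioi_phi (s : ℝ) : ∫ x in Ioi s, phi x = Phi (-s) := by
  calc ∫ x in Ioi s, phi x = ∫ x in Ioi s, phi (-x) := by simp_rw [phi_neg]
    _ = Phi (-s) := integral_comp_neg_Ioi s phi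

lemma exp_mul_mul_phi (c x : ℝ) : exp (c * x) * phi x = exp (c ^ 2 / 2) * phi (x - c) := by
  simp only [phi]
  rw [mul_left_comm, ← exp_add, mul_left_comm, ← exp_add]
  ring_nf

lemma setIntegral_Ioi_phi_sub (b c : ℝ) : ∫ x in Ioi b, phi (x - c) = Phi (c - b) := by
  have := (measurePreserving_sub_right volume c).setIntegral_preimage_emb
    (measurableEmbedding_subRight c) phi (Ioi (b - c))
  rw [preimage_sub_const_Ioi, sub_add_cancel] at this
  rw [this, setIntegral_Ioi_phi, neg_sub]

lemma integral_gaussianReal_eq_integral_phi_mul (f : ℝ → ℝ) :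
    ∫ z, f z ∂gaussianReal 0 1 = ∫ z, phi z * f z := by
  rw [integral_gaussianReal_eq_integral_smul one_ne_zero, phi_eq_gaussianPDFReal]; rfl

lemma setIntegral_gaussianReal_eq_setIntegral_phi_mul {s : Set ℝ} (hs : MeasurableSet s)
    (f : ℝ → ℝ) :
    ∫ z in s, f z ∂gaussianReal 0 1 = ∫ z in s, phi z * f z := by
  rw [← integral_indicator hs, ← integral_indicator hs, integral_gaussianReal_eq_integral_phi_mul]
  congr 1; ext z
  by_cases hz : z ∈ s <;> simp [hz]

lemma setIntegral_Ioi_exp_mul_gaussianReal (b c : ℝ) :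
    ∫ z in Ioi b, exp (c * z) ∂gaussianReal 0 1 = exp (c ^ 2 / 2) * Phi (c - b) := by
  simp_rw [setIntegral_gaussianReal_eq_setIntegral_phi_mul measurableSet_Ioi, mul_comm (phi _),
    exp_mul_mul_phi, integral_const_mul, setIntegral_Ioi_phi_sub]

lemma integral_exp_mul_gaussianReal (c : ℝ) :
    ∫ z, exp (c * z) ∂gaussianReal 0 1 = exp (c ^ 2 / 2) := by
  simpa [mgf] using congrFun (mgf_id_gaussianReal (μ := 0) (v := 1)) c

lemma gaussianReal_real_Ioi (b : ℝ) : (gaussianReal 0 1).real (Ioi b) = Phi (-b) := by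
  simpa using setIntegral_Ioi_exp_mul_gaussianReal b 0

lemma max_sub_add_ite_le (x y K : ℝ) :
    max (x - K) 0 + (if K < x then y - x else 0) ≤ max (y - K) 0 := by
  split_ifs with h
  · rw [max_eq_left (sub_nonneg.2 h.le)]
    linarith [le_max_left (y - K) 0]
  · rw [max_eq_right (sub_nonpos.2 (not_lt.1 h))]
    simp

lemma max_sub_add_ite_lt {x y K : ℝ} (h : x < K ∧ K < y ∨ y < K ∧ K < x) :
    max (x - K) 0 + (if K < x then y - x else 0) < max (y - K) 0 := by
  rcases h with ⟨hx, hy⟩ | ⟨hy, hx⟩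
  · rw [if_neg hx.not_gt, max_eq_right (by linarith), max_eq_left (by linarith)]
    linarith
  · rw [if_pos hx, max_eq_left (by linarith), max_eq_right (by linarith)]
    linarith

lemma integral_pos_of_pos_on_Ioo {μ : Measure ℝ} (hμ : volume ≪ μ) {g : ℝ → ℝ} (hg : 0 ≤ g)
    (hint : Integrable g μ) {u v : ℝ} (huv : u < v) (hpos : ∀ z ∈ Ioo u v, 0 < g z) :
    0 < ∫ z, g z ∂μ := by
  rw [integral_pos_iff_support_of_nonneg hg hint]
  have hvol : volume (Ioo u v) ≠ 0 := by simp [huv]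
  exact pos_iff_ne_zero.2 fun h0 =>
    hvol (hμ (measure_mono_null (fun z hz => (hpos z hz).ne') h0))

noncomputable def terminalPrice (S₀ r T σ z : ℝ) : ℝ :=
  S₀ * exp (r * T - σ ^ 2 * T / 2 + σ * sqrt T * z)

noncomputable def expectedCallPayoff (S₀ K r T σ : ℝ) : ℝ :=
  ∫ z, max (terminalPrice S₀ r T σ z - K) 0 ∂gaussianReal 0 1

noncomputable def expectedPutPayoff (S₀ K r T σ : ℝ) : ℝ :=
  ∫ z, max (K - terminalPrice S₀ r T σ z) 0 ∂gaussianReal 0 1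

lemma terminalPrice_eq (S₀ r T σ z : ℝ) :
    terminalPrice S₀ r T σ z = S₀ * exp (r * T - σ ^ 2 * T / 2) * exp (σ * sqrt T * z) := by
  rw [terminalPrice, exp_add, ← mul_assoc]

lemma terminalPrice_mul (m S₀ r T σ z : ℝ) :
    terminalPrice (m * S₀) r T σ z = m * terminalPrice S₀ r T σ z :=
  mul_assoc _ _ _

lemma integrable_terminalPrice {S₀ r T σ : ℝ} :
    Integrable (terminalPrice S₀ r T σ) (gaussianReal 0 1) := by
  simp_rw [funext (terminalPrice_eq S₀ r T σ)]
  exact (integrable_exp_mul_gaussianReal _).const_mul _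

lemma integrable_max_terminalPrice_sub (S₀ K r T σ : ℝ) :
    Integrable (fun z => max (terminalPrice S₀ r T σ z - K) 0) (gaussianReal 0 1) :=
  (integrable_terminalPrice.sub (integrable_const K)).pos_part

section BlackScholes

variable {S₀ K r T σ m : ℝ}

lemma strictMono_terminalPrice (hS : 0 < S₀) (hσ : 0 < σ) (hT : 0 < T) :
    StrictMono (terminalPrice S₀ r T σ) := fun z z' hzz' => by
  have : σ * sqrt T * z < σ * sqrt T * z' :=
    mul_lt_mul_of_pos_left hzz' (mul_pos hσ (sqrt_pos.2 hT))
  unfold terminalPrice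
  gcongr

lemma terminalPrice_sub_dBS (hS : 0 < S₀) (hK : 0 < K) (hσ : 0 < σ) (hT : 0 < T) :
    terminalPrice S₀ r T σ (σ * sqrt T - dBS S₀ K r T σ) = K := by
  have hsT : sqrt T ≠ 0 := (sqrt_pos.2 hT).ne'
  have hexp :
      r * T - σ ^ 2 * T / 2 + σ * sqrt T * (σ * sqrt T - dBS S₀ K r T σ) = log (K / S₀) := by
    rw [dBS, mul_sub, mul_div_cancel₀ _ (mul_ne_zero hσ.ne' hsT), log_div hS.ne' hK.ne',
      log_div hK.ne' hS.ne', mul_mul_mul_comm, mul_self_sqrt hT.le]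
    ring
  rw [terminalPrice, hexp, exp_log (div_pos hK hS), mul_div_cancel₀ _ hS.ne']

lemma lt_terminalPrice_iff {z : ℝ} (hS : 0 < S₀) (hK : 0 < K) (hσ : 0 < σ) (hT : 0 < T) :
    K < terminalPrice S₀ r T σ z ↔ σ * sqrt T - dBS S₀ K r T σ < z := by
  conv_lhs => rw [← terminalPrice_sub_dBS (r := r) hS hK hσ hT]
  exact (strictMono_terminalPrice hS hσ hT).lt_iff_lt

lemma mul_exp_mul_exp_sq_div_two (hT : 0 ≤ T) :
    S₀ * exp (r * T - σ ^ 2 * T / 2) * exp ((σ * sqrt T) ^ 2 / 2) = S₀ * exp (r * T) := by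
  rw [mul_pow, sq_sqrt hT, mul_assoc, ← exp_add, sub_add_cancel]

lemma integral_terminalPrice (hT : 0 ≤ T) :
    ∫ z, terminalPrice S₀ r T σ z ∂gaussianReal 0 1 = S₀ * exp (r * T) := by
  simp_rw [terminalPrice_eq S₀ r T σ, integral_const_mul, integral_exp_mul_gaussianReal,
    mul_exp_mul_exp_sq_div_two hT]

lemma setIntegral_Ioi_terminalPrice (hT : 0 ≤ T) (b : ℝ) :
    ∫ z in Ioi b, terminalPrice S₀ r T σ z ∂gaussianReal 0 1
      = S₀ * exp (r * T) * Phi (σ * sqrt T - b) := by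
  simp_rw [terminalPrice_eq S₀ r T σ, integral_const_mul, setIntegral_Ioi_exp_mul_gaussianReal,
    ← mul_assoc, mul_exp_mul_exp_sq_div_two hT]

lemma expectedCallPayoff_eq (hS : 0 < S₀) (hK : 0 < K) (hσ : 0 < σ) (hT : 0 < T) :
    expectedCallPayoff S₀ K r T σ = exp (r * T) * callBS S₀ K r T σ := by
  have hpayoff : (fun z => max (terminalPrice S₀ r T σ z - K) 0)
      = (Ioi (σ * sqrt T - dBS S₀ K r T σ)).indicator
          (fun z => terminalPrice S₀ r T σ z - K) := by
    ext z
    simp only [indicator_apply, mem_Ioi, ← lt_terminalPrice_iff hS hK hσ hT]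
    split_ifs with h
    · exact max_eq_left (sub_nonneg.2 h.le)
    · exact max_eq_right (sub_nonpos.2 (not_lt.1 h))
  rw [expectedCallPayoff, hpayoff, integral_indicator measurableSet_Ioi,
    integral_sub integrable_terminalPrice.integrableOn (integrable_const K),
    setIntegral_Ioi_terminalPrice hT.le, setIntegral_const, gaussianReal_real_Ioi, smul_eq_mul,
    callBS, sub_sub_cancel, neg_sub, exp_neg]
  field_simp

lemma expectedPutPayoff_eq_add (hT : 0 ≤ T) :
    expectedPutPayoff S₀ K r T σ = expectedCallPayoff S₀ K r T σ - S₀ * exp (r * T) + K := by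
  have hparity (x : ℝ) : max (K - x) 0 = max (x - K) 0 - (x - K) := by
    have := max_zero_sub_max_neg_zero_eq_self (x - K)
    rw [neg_sub] at this
    linarith
  have hX := integrable_terminalPrice (S₀ := S₀) (r := r) (T := T) (σ := σ)
  have hXK : Integrable (fun z => terminalPrice S₀ r T σ z - K) (gaussianReal 0 1) :=
    hX.sub (integrable_const K)
  rw [expectedPutPayoff, expectedCallPayoff]
  simp_rw [hparity]
  rw [integral_sub (integrable_max_terminalPrice_sub S₀ K r T σ) hXK,
    integral_sub hX (integrable_const K), integral_terminalPrice hT]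
  simp
  ring

lemma expectedPutPayoff_eq (hS : 0 < S₀) (hK : 0 < K) (hσ : 0 < σ) (hT : 0 < T) :
    expectedPutPayoff S₀ K r T σ = exp (r * T) * putBS S₀ K r T σ := by
  rw [expectedPutPayoff_eq_add hT.le, expectedCallPayoff_eq hS hK hσ hT, putBS, exp_neg]
  field_simp

lemma exists_Ioo_forall_strictBetween (hS : 0 < S₀) (hK : 0 < K) (hσ : 0 < σ) (hT : 0 < T)
    (hm : 0 < m) (hm1 : m ≠ 1) :
    ∃ u v, u < v ∧ ∀ z ∈ Ioo u v,
      terminalPrice S₀ r T σ z < K ∧ K < m * terminalPrice S₀ r T σ z ∨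
      m * terminalPrice S₀ r T σ z < K ∧ K < terminalPrice S₀ r T σ z := by
  have hX := strictMono_terminalPrice (r := r) hS hσ hT
  have hb := terminalPrice_sub_dBS (r := r) hS hK hσ hT
  have hb' := terminalPrice_sub_dBS (r := r) hS (div_pos hK hm) hσ hT
  rcases hm1.lt_or_gt with hlt | hgt
  · have hKK : K < K / m := (lt_div_iff₀ hm).2 (by nlinarith)
    refine ⟨σ * sqrt T - dBS S₀ K r T σ, σ * sqrt T - dBS S₀ (K / m) r T σ,
      hX.lt_iff_lt.1 (by rwa [hb, hb']), fun z ⟨hz, hz'⟩ => Or.inr ⟨?_, ?_⟩⟩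
    · have := hX hz'
      rwa [hb', lt_div_iff₀ hm, mul_comm] at this
    · simpa [hb] using hX hz
  · have hKK : K / m < K := (div_lt_iff₀ hm).2 (by nlinarith)
    refine ⟨σ * sqrt T - dBS S₀ (K / m) r T σ, σ * sqrt T - dBS S₀ K r T σ,
      hX.lt_iff_lt.1 (by rwa [hb, hb']), fun z ⟨hz, hz'⟩ => Or.inl ⟨?_, ?_⟩⟩
    · simpa [hb] using hX hz'
    · have := hX hz
      rwa [hb', div_lt_iff₀ hm, mul_comm] at this

/-- The convex map `m ↦ E (m X - K)⁺` lies strictly above its tangent at `m = 1`, whose slope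
`E[X; X > K] = S₀ e^{rT} Φ(d)` is computed by tilting. -/
lemma mul_Phi_dBS_lt_expectedCallPayoff_sub (hS : 0 < S₀) (hK : 0 < K) (hσ : 0 < σ)
    (hT : 0 < T) (hm : 0 < m) (hm1 : m ≠ 1) :
    (m - 1) * (S₀ * exp (r * T)) * Phi (dBS S₀ K r T σ)
      < expectedCallPayoff (m * S₀) K r T σ - expectedCallPayoff S₀ K r T σ := by
  set X := terminalPrice S₀ r T σ
  set b := σ * sqrt T - dBS S₀ K r T σ
  have hind (z : ℝ) :
      (Ioi b).indicator (fun z => (m - 1) * X z) z = if K < X z then m * X z - X z else 0 := by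
    simp only [indicator_apply, mem_Ioi, b, X, ← lt_terminalPrice_iff hS hK hσ hT]
    split_ifs <;> ring
  have hslope : ∫ z, (Ioi b).indicator (fun z => (m - 1) * X z) z ∂gaussianReal 0 1
      = (m - 1) * (S₀ * exp (r * T)) * Phi (dBS S₀ K r T σ) := by
    rw [integral_indicator measurableSet_Ioi, integral_const_mul,
      setIntegral_Ioi_terminalPrice hT.le, sub_sub_cancel, ← mul_assoc]
  have hCm : Integrable (fun z => max (m * X z - K) 0) (gaussianReal 0 1) := by
    simpa only [terminalPrice_mul] using integrable_max_terminalPrice_sub (m * S₀) K r T σ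
  have hC : Integrable (fun z => max (X z - K) 0) (gaussianReal 0 1) :=
    integrable_max_terminalPrice_sub S₀ K r T σ
  have hI : Integrable (fun z => (Ioi b).indicator (fun z => (m - 1) * X z) z)
      (gaussianReal 0 1) :=
    (integrable_terminalPrice.const_mul (m - 1)).indicator measurableSet_Ioi
  have hCmC : Integrable (fun z => max (m * X z - K) 0 - max (X z - K) 0) (gaussianReal 0 1) :=
    hCm.sub hC
  have hgap : 0 < ∫ z, (max (m * X z - K) 0 - max (X z - K) 0
      - (Ioi b).indicator (fun z => (m - 1) * X z) z) ∂gaussianReal 0 1 := by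
    obtain ⟨u, v, huv, hbetween⟩ := exists_Ioo_forall_strictBetween (r := r) hS hK hσ hT hm hm1
    refine integral_pos_of_pos_on_Ioo (gaussianReal_absolutelyContinuous' 0 one_ne_zero)
      (fun z => ?_) (hCmC.sub hI) huv (fun z hz => ?_)
    · have := max_sub_add_ite_le (X z) (m * X z) K
      simp only [Pi.zero_apply, hind]
      linarith
    · have := max_sub_add_ite_lt (hbetween z hz)
      simp only [hind]
      linarith
  rw [integral_sub hCmC hI, integral_sub hCm hC, hslope] at hgap
  simp only [expectedCallPayoff, terminalPrice_mul]
  linarith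

lemma neg_mul_lt_expectedPutPayoff_sub (hS : 0 < S₀) (hK : 0 < K) (hσ : 0 < σ) (hT : 0 < T)
    (hm : 0 < m) (hm1 : m ≠ 1) :
    -((m - 1) * (S₀ * exp (r * T)) * (1 - Phi (dBS S₀ K r T σ)))
      < expectedPutPayoff (m * S₀) K r T σ - expectedPutPayoff S₀ K r T σ := by
  rw [expectedPutPayoff_eq_add hT.le, expectedPutPayoff_eq_add hT.le]
  linarith [mul_Phi_dBS_lt_expectedCallPayoff_sub (r := r) hS hK hσ hT hm hm1]

end BlackScholes

theorem stmt7_general (S₀ Kp Kc σ T r μp μc : ℝ) (hS : 0 < S₀) (hKp : 0 < Kp) (hKc : 0 < Kc)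
    (hσ : 0 < σ) (hT : 0 < T) (hμp : 0 < μp) (hμc : 0 < μc)
    (h : ℝ → ℝ)
    (hh : ∀ a : ℝ, h a =
      μp * (∫ z, max (Kp - Real.exp ((a - r) * T) *
              (S₀ * Real.exp (r * T - σ ^ 2 * T / 2 + σ * Real.sqrt T * z))) 0
            ∂(gaussianReal 0 1)) +
      μc * (∫ z, max (Real.exp ((a - r) * T) *
              (S₀ * Real.exp (r * T - σ ^ 2 * T / 2 + σ * Real.sqrt T * z)) - Kc) 0
            ∂(gaussianReal 0 1)))
    (hratio : μc / μp = (1 - Phi (dBS S₀ Kp r T σ)) / Phi (dBS S₀ Kc r T σ)) :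
    h r = Real.exp (r * T) * (μp * putBS S₀ Kp r T σ + μc * callBS S₀ Kc r T σ) ∧
      ∀ a : ℝ, a ≠ r →
        h a - Real.exp (r * T) * (μp * putBS S₀ Kp r T σ + μc * callBS S₀ Kc r T σ) > 0 := by
  have hpayoff (a : ℝ) : h a = μp * expectedPutPayoff (exp ((a - r) * T) * S₀) Kp r T σ
      + μc * expectedCallPayoff (exp ((a - r) * T) * S₀) Kc r T σ := by
    simp only [hh, expectedPutPayoff, expectedCallPayoff, terminalPrice_mul]
    rfl
  have hpayoff_r :
      h r = μp * expectedPutPayoff S₀ Kp r T σ + μc * expectedCallPayoff S₀ Kc r T σ := by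
    simpa using hpayoff r
  have hcost : h r = exp (r * T) * (μp * putBS S₀ Kp r T σ + μc * callBS S₀ Kc r T σ) := by
    rw [hpayoff_r, expectedPutPayoff_eq hS hKp hσ hT, expectedCallPayoff_eq hS hKc hσ hT]
    ring
  refine ⟨hcost, fun a ha => ?_⟩
  have hm1 : exp ((a - r) * T) ≠ 1 := by
    rw [Ne, exp_eq_one_iff]
    exact mul_ne_zero (sub_ne_zero.2 ha) hT.ne'
  have hput := mul_lt_mul_of_pos_left
    (neg_mul_lt_expectedPutPayoff_sub (r := r) hS hKp hσ hT (exp_pos _) hm1) hμp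
  have hcall := mul_lt_mul_of_pos_left
    (mul_Phi_dBS_lt_expectedCallPayoff_sub (r := r) hS hKc hσ hT (exp_pos _) hm1) hμc
  have hbalance : μp * (1 - Phi (dBS S₀ Kp r T σ)) = μc * Phi (dBS S₀ Kc r T σ) := by
    rw [div_eq_div_iff hμp.ne' (Phi_pos _).ne'] at hratio
    linarith
  rw [← hcost, hpayoff a, hpayoff_r]
  linear_combination hput + hcall + ((exp ((a - r) * T) - 1) * (S₀ * exp (r * T))) * hbalance

theorem stmt7 (S₀ Kp Kc σ T r μp μc : ℝ) (hS : 0 < S₀) (hKp : 0 < Kp) (hKc : 0 < Kc)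
    (hσ : 0 < σ) (hT : 0 < T) (hr : 0 ≤ r) (hμp : 0 < μp) (hμc : 0 < μc)
    (h : ℝ → ℝ)
    (hh : ∀ a : ℝ, h a =
      μp * (∫ z, max (Kp - Real.exp ((a - r) * T) *
              (S₀ * Real.exp (r * T - σ ^ 2 * T / 2 + σ * Real.sqrt T * z))) 0
            ∂(gaussianReal 0 1)) +
      μc * (∫ z, max (Real.exp ((a - r) * T) *
              (S₀ * Real.exp (r * T - σ ^ 2 * T / 2 + σ * Real.sqrt T * z)) - Kc) 0
            ∂(gaussianReal 0 1)))
    (hratio : μc / μp = (1 - Phi (dBS S₀ Kp r T σ)) / Phi (dBS S₀ Kc r T σ)) :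
    h r = Real.exp (r * T) * (μp * putBS S₀ Kp r T σ + μc * callBS S₀ Kc r T σ) ∧
      ∀ a : ℝ, a ≠ r →
        h a - Real.exp (r * T) * (μp * putBS S₀ Kp r T σ + μc * callBS S₀ Kc r T σ) > 0 :=
  stmt7_general S₀ Kp Kc σ T r μp μc hS hKp hKc hσ hT hμp hμc h hh hratio
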